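/- Fix β ∈ (1,2], q > 1, T ∈ (0,∞), and constants A > 0, α_0 > 0. Assume 0 ≤ a_{i,j} = a_{j,i} ≤ A(i+j), 0 ≤ p_{i,j} = p_{j,i} ≤ 1, and N_{i,j}^s = N_{j,i}^s ≥ 0 with ∑_{s=1}^{i+j−1} s N_{i,j}^s = i+j and N_{i,j}^s ≤ α_0. Let the nonnegative initial data w^0 = (w_i^0)_{i≥1} satisfy ∑_{i≥1} i^β w_i^0 < ∞ and ∑_{i=1}^{∞} i^q w_i^0 < ∞, and let w be the classical solution of the discrete coagulation equations with collisional breakage constructed as the limit of the zero-extended truncated solutions. Then, with ȷ_q > 0 the constant (depending only on q) for which (i+j)((i+j)^q − i^q − j^q) ≤ ȷ_q (i j^q + i^q j) for all i,j ≥ 1, and ‖w^0‖ = ∑_{i≥1} i^β w_i^0, the q-th moment propagates: ∑_{i=1}^{∞} i^q w_i(t) ≤ exp(A ȷ_q ‖w^0‖ t) ∑_{i=1}^{∞} i^q w_i^0 for all t ∈ [0,T]; in particular sup_{t∈[0,T]} ∑_{i=1}^{∞} i^q w_i(t) < ∞. -/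

import Mathlib

/-- The coagulation part of the right-hand side of the discrete coagulation
equations with collisional breakage for clusters of size `i`:
`(1/2) ∑_{j=1}^{i−1} p_{j,i−j} a_{j,i−j} wⱼ w_{i−j}`. -/
noncomputable def coagGain (a p : ℕ → ℕ → ℝ) (i : ℕ) (w : ℕ → ℝ) : ℝ :=
  (1/2) * ∑ j ∈ Finset.Icc 1 (i-1), p j (i-j) * a j (i-j) * w j * w (i-j)

/-- The loss term `∑_{j=1}^∞ a_{i,j} wᵢ wⱼ` (the sum over `j ≥ 1` written as a
sum over `j : ℕ` via the shift `j ↦ j + 1`). -/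
noncomputable def coagLoss (a : ℕ → ℕ → ℝ) (i : ℕ) (w : ℕ → ℝ) : ℝ :=
  ∑' j : ℕ, a i (j+1) * w i * w (j+1)

/-- The summand of the breakage gain term: for `m : ℕ` (encoding `j = i + 1 + m`),
`∑_{k=1}^{j−1} N_{j−k,k}^i (1 − p_{j−k,k}) a_{j−k,k} w_{j−k} w_k`. -/
noncomputable def breakGainTerm (a p : ℕ → ℕ → ℝ) (N : ℕ → ℕ → ℕ → ℝ) (i m : ℕ)
    (w : ℕ → ℝ) : ℝ :=
  ∑ k ∈ Finset.Icc 1 (i+m),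
    N (i+1+m-k) k i * (1 - p (i+1+m-k) k) * a (i+1+m-k) k * w (i+1+m-k) * w k

/-- The breakage gain term
`(1/2) ∑_{j=i+1}^∞ ∑_{k=1}^{j−1} N_{j−k,k}^i (1 − p_{j−k,k}) a_{j−k,k} w_{j−k} w_k`
(the sum over `j ≥ i + 1` written as a sum over `m : ℕ` via `j = i + 1 + m`). -/
noncomputable def breakGain (a p : ℕ → ℕ → ℝ) (N : ℕ → ℕ → ℕ → ℝ) (i : ℕ)
    (w : ℕ → ℝ) : ℝ :=
  (1/2) * ∑' m : ℕ, breakGainTerm a p N i m w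

/-- The full right-hand side of the discrete coagulation equations with
collisional breakage for clusters of size `i`. -/
noncomputable def coagRHS (a p : ℕ → ℕ → ℝ) (N : ℕ → ℕ → ℕ → ℝ) (i : ℕ)
    (w : ℕ → ℝ) : ℝ :=
  coagGain a p i w - coagLoss a i w + breakGain a p N i w

/-- `w` is a classical solution of the discrete coagulation equations with
collisional breakage on `[0, T]`: each `wᵢ` (for `i ≥ 1`) is a nonnegative
continuously differentiable function on `[0, T]`, all the series involved in
the right-hand side converge, and the equations hold on `[0, T]`. -/
def IsCoagBreakSol (a p : ℕ → ℕ → ℝ) (N : ℕ → ℕ → ℕ → ℝ) (T : ℝ)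
    (w : ℕ → ℝ → ℝ) : Prop :=
  (∀ i, 1 ≤ i → ContDiffOn ℝ 1 (w i) (Set.Icc 0 T)) ∧
  (∀ i, 1 ≤ i → ∀ t ∈ Set.Icc (0:ℝ) T, 0 ≤ w i t) ∧
  (∀ i, 1 ≤ i → ∀ t ∈ Set.Icc (0:ℝ) T,
    Summable (fun j : ℕ => a i (j+1) * w i t * w (j+1) t) ∧
    Summable (fun m : ℕ => breakGainTerm a p N i m (fun j => w j t)) ∧
    HasDerivWithinAt (w i) (coagRHS a p N i (fun j => w j t)) (Set.Icc 0 T) t)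

/-- The right-hand side of the truncated discrete coagulation equations with
collisional breakage. -/
noncomputable def truncRHS (a p : ℕ → ℕ → ℝ) (N : ℕ → ℕ → ℕ → ℝ) (n i : ℕ)
    (w : ℕ → ℝ) : ℝ :=
    (1/2) * ∑ j ∈ Finset.Icc 1 (i-1), p j (i-j) * a j (i-j) * w j * w (i-j)
  - ∑ j ∈ Finset.Icc 1 (n-i), a i j * w i * w j
  + (1/2) * ∑ j ∈ Finset.Icc (i+1) n, ∑ k ∈ Finset.Icc 1 (j-1),
      N (j-k) k i * (1 - p (j-k) k) * a (j-k) k * w (j-k) * w k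

/-!
Testing the truncated system of size `n` against weights `cᵢ` gives the weak form
`∑ᵢ cᵢ wᵢ' = ½ ∑_{i+j ≤ n} a_{ij} wᵢ wⱼ (p_{ij} c_{i+j} − cᵢ − cⱼ + (1 − p_{ij}) ∑ₛ cₛ N^s_{ij})`.
For `cᵢ = i` the bracket vanishes by `∑ₛ s N^s_{ij} = i + j`, so the mass of every truncated
solution is conserved, hence bounded by `‖w⁰‖` since `i ≤ i^β`. For `cᵢ = i^q` the same identity
gives `∑ₛ s^q N^s_{ij} ≤ (i + j)^{q-1} ∑ₛ s N^s_{ij} = (i + j)^q`, so the bracket is at most `(i + j)^q − i^q − j^q`; with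
`a_{ij} ≤ A (i + j)` and the defining inequality of `ȷ_q`, the derivative of the `q`-th moment is
at most `A ȷ_q ‖w⁰‖` times the moment, and Gronwall bounds the moments of all truncated
solutions uniformly in `n`. A discrete Fatou lemma passes the bound to the pointwise limit `w`.
-/

open Finset Filter Topology

def pairsSumLe (n : ℕ) : Finset (ℕ × ℕ) :=
  (Icc 1 n ×ˢ Icc 1 n).filter fun x => x.1 + x.2 ≤ n

theorem mem_pairsSumLe {n : ℕ} {x : ℕ × ℕ} :
    x ∈ pairsSumLe n ↔ 1 ≤ x.1 ∧ 1 ≤ x.2 ∧ x.1 + x.2 ≤ n := by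
  simp only [pairsSumLe, mem_filter, mem_product, mem_Icc]
  omega

section Reindexing

variable {M : Type*} [AddCommMonoid M] (n : ℕ)

theorem sum_pairsSumLe_swap (f : ℕ → ℕ → M) :
    ∑ x ∈ pairsSumLe n, f x.1 x.2 = ∑ x ∈ pairsSumLe n, f x.2 x.1 := by
  refine sum_nbij' Prod.swap Prod.swap ?_ ?_ (fun _ _ => rfl) (fun _ _ => rfl) (fun _ _ => rfl) <;>
  · intro x hx
    simp only [mem_pairsSumLe, Prod.fst_swap, Prod.snd_swap] at hx ⊢
    omega

theorem sum_Icc_sum_Icc_tsub_eq_sum_pairsSumLe (f : ℕ → ℕ → M) :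
    ∑ i ∈ Icc 1 n, ∑ j ∈ Icc 1 (n - i), f i j = ∑ x ∈ pairsSumLe n, f x.1 x.2 := by
  refine (sum_finset_product' _ _ _ fun x => ?_).symm
  simp only [mem_pairsSumLe, mem_Icc]
  omega

theorem sum_Icc_sum_Icc_pred_eq_sum_pairsSumLe (f : ℕ → ℕ → M) :
    ∑ i ∈ Icc 1 n, ∑ j ∈ Icc 1 (i - 1), f i j = ∑ x ∈ pairsSumLe n, f (x.1 + x.2) x.1 := by
  rw [sum_sigma']
  refine sum_nbij' (fun x => (x.2, x.1 - x.2)) (fun x => ⟨x.1 + x.2, x.1⟩) ?_ ?_ ?_ ?_ ?_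
  all_goals
    rintro ⟨_, _⟩ hx
    simp only [mem_sigma, mem_Icc, mem_pairsSumLe, Sigma.mk.injEq, Prod.mk.injEq,
      heq_iff_eq, and_true, true_and] at hx ⊢
  · omega
  · omega
  · omega
  · omega
  · rw [Nat.add_sub_cancel' (by omega)]

theorem sum_Icc_sum_Icc_succ_sum_Icc_pred_eq_sum_pairsSumLe (f : ℕ → ℕ → ℕ → M) :
    ∑ i ∈ Icc 1 n, ∑ j ∈ Icc (i + 1) n, ∑ k ∈ Icc 1 (j - 1), f i j k
      = ∑ x ∈ pairsSumLe n, ∑ s ∈ Icc 1 (x.1 + x.2 - 1), f s (x.1 + x.2) x.1 := by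
  rw [sum_comm' (t' := Icc 1 n) (s' := fun j => Icc 1 (j - 1))
    (by intros; simp only [mem_Icc]; omega)]
  exact (sum_congr rfl fun _ _ => sum_comm).trans
    (sum_Icc_sum_Icc_pred_eq_sum_pairsSumLe n fun j k => ∑ s ∈ Icc 1 (j - 1), f s j k)

end Reindexing

theorem le_mul_exp_of_hasDerivWithinAt_le_mul {f f' : ℝ → ℝ} {K a b : ℝ}
    (hf : ∀ x ∈ Set.Icc a b, HasDerivWithinAt f (f' x) (Set.Icc a b) x)
    (bound : ∀ x ∈ Set.Icc a b, f' x ≤ K * f x) :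
    ∀ t ∈ Set.Icc a b, f t ≤ f a * Real.exp (K * (t - a)) := by
  intro t ht
  have := le_gronwallBound_of_liminf_deriv_right_le (ε := 0)
    (fun x hx => (hf x hx).continuousWithinAt)
    (fun x hx _ hr => ((hf x (Set.Ico_subset_Icc_self hx)).mono_of_mem_nhdsWithin
      (Icc_mem_nhdsGE_of_mem hx)).liminf_right_slope_le hr)
    le_rfl (fun x hx => by simpa using bound x (Set.Ico_subset_Icc_self hx)) t ht
  rwa [gronwallBound_ε0] at this

theorem summable_and_tsum_le_of_tendsto {F : ℕ → ℕ → ℝ} {f : ℕ → ℝ} {B : ℝ}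
    (hF : ∀ i, Tendsto (F · i) atTop (𝓝 (f i)))
    (hF_nonneg : ∀ᶠ n in atTop, ∀ i ≤ n, 0 ≤ F n i)
    (hB : ∀ᶠ n in atTop, ∑ i ∈ range (n + 1), F n i ≤ B) :
    Summable f ∧ ∑' i, f i ≤ B := by
  have hf : ∀ i, 0 ≤ f i := fun i =>
    ge_of_tendsto (hF i) ((hF_nonneg.and (eventually_ge_atTop i)).mono fun n hn => hn.1 i hn.2)
  have partial_le : ∀ J, ∑ i ∈ range J, f i ≤ B := fun J => by
    refine le_of_tendsto (tendsto_finsetSum _ fun i _ => hF i) ?_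
    filter_upwards [hF_nonneg, hB, eventually_ge_atTop J] with n hn hBn hJn
    refine le_trans (sum_le_sum_of_subset_of_nonneg (range_subset_range.2 (by omega))
      fun i hi _ => hn i ?_) hBn
    rw [mem_range] at hi
    omega
  exact ⟨summable_of_sum_range_le hf partial_le, Real.tsum_le_of_sum_range_le hf partial_le⟩

section MomentSums

variable {r : ℝ} {x : ℕ → ℝ}

theorem sum_range_succ_rpow_mul_eq_sum_Icc (hr : r ≠ 0) (n : ℕ) :
    ∑ i ∈ range (n + 1), (i : ℝ) ^ r * x i = ∑ i ∈ Icc 1 n, (i : ℝ) ^ r * x i := by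
  refine (sum_subset (fun i hi => ?_) fun i hi hi' => ?_).symm
  · rw [mem_Icc] at hi
    rw [mem_range]
    omega
  · obtain rfl : i = 0 := by rw [mem_range] at hi; rw [mem_Icc] at hi'; omega
    simp [Real.zero_rpow hr]

theorem sum_Icc_rpow_mul_le_tsum (hr : r ≠ 0) (hx : ∀ i, 1 ≤ i → 0 ≤ x i)
    (hs : Summable fun i : ℕ => (i : ℝ) ^ r * x i) (n : ℕ) :
    ∑ i ∈ Icc 1 n, (i : ℝ) ^ r * x i ≤ ∑' i : ℕ, (i : ℝ) ^ r * x i := by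
  refine hs.sum_le_tsum _ fun i _ => ?_
  rcases Nat.eq_zero_or_pos i with rfl | hi
  · simp [Real.zero_rpow hr]
  · exact mul_nonneg (by positivity) (hx i hi)

end MomentSums

section MomentInequalities

variable {q : ℝ}

theorem sum_rpow_mul_le_rpow {ι : Type*} (S : Finset ι) {x μ : ι → ℝ} {m : ℝ} (hq : 1 ≤ q)
    (hx : ∀ i ∈ S, 0 ≤ x i ∧ x i ≤ m) (hμ : ∀ i ∈ S, 0 ≤ μ i)
    (hsum : ∑ i ∈ S, x i * μ i = m) :
    ∑ i ∈ S, x i ^ q * μ i ≤ m ^ q := by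
  have hm : 0 ≤ m := hsum ▸ sum_nonneg fun i hi => mul_nonneg (hx i hi).1 (hμ i hi)
  have split : ∀ y : ℝ, 0 ≤ y → y ^ q = y ^ (q - 1) * y := fun y hy => by
    rw [← Real.rpow_add_one' hy (by linarith), sub_add_cancel]
  calc ∑ i ∈ S, x i ^ q * μ i ≤ ∑ i ∈ S, m ^ (q - 1) * (x i * μ i) := by
        refine sum_le_sum fun i hi => ?_
        rw [split _ (hx i hi).1, mul_assoc]
        exact mul_le_mul_of_nonneg_right
          (Real.rpow_le_rpow (hx i hi).1 (hx i hi).2 (by linarith))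
          (mul_nonneg (hx i hi).1 (hμ i hi))
    _ = m ^ q := by rw [← mul_sum, hsum, split m hm]

theorem collision_moment_change_le {x y a p S A jq : ℝ} (hx : 0 ≤ x) (hy : 0 ≤ y) (hq : 1 ≤ q)
    (hA : 0 ≤ A) (ha_nonneg : 0 ≤ a) (ha_bound : a ≤ A * (x + y)) (hp_le : p ≤ 1)
    (hS : S ≤ (x + y) ^ q)
    (hjq : (x + y) * ((x + y) ^ q - x ^ q - y ^ q) ≤ jq * (x * y ^ q + x ^ q * y)) :
    a * (p * (x + y) ^ q - x ^ q - y ^ q + (1 - p) * S) ≤ A * jq * (x * y ^ q + x ^ q * y) := by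
  have hΔ : 0 ≤ (x + y) ^ q - x ^ q - y ^ q := by
    linarith [Real.add_rpow_le_rpow_add hx hy hq]
  calc a * (p * (x + y) ^ q - x ^ q - y ^ q + (1 - p) * S)
      ≤ a * ((x + y) ^ q - x ^ q - y ^ q) := by
        gcongr
        nlinarith
    _ ≤ A * (x + y) * ((x + y) ^ q - x ^ q - y ^ q) := by gcongr
    _ ≤ A * jq * (x * y ^ q + x ^ q * y) := by
        rw [mul_assoc, mul_assoc]
        gcongr

end MomentInequalities

section TruncatedSystem

variable {a p : ℕ → ℕ → ℝ} {N : ℕ → ℕ → ℕ → ℝ}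

theorem sum_mul_truncRHS (ha_symm : ∀ i j, a i j = a j i) (n : ℕ) (c w : ℕ → ℝ) :
    ∑ i ∈ Icc 1 n, c i * truncRHS a p N n i w
      = (1 / 2) * ∑ x ∈ pairsSumLe n, a x.1 x.2 * w x.1 * w x.2 *
          (p x.1 x.2 * c (x.1 + x.2) - c x.1 - c x.2
            + (1 - p x.1 x.2) * ∑ s ∈ Icc 1 (x.1 + x.2 - 1), c s * N x.1 x.2 s) := by
  have gain : ∑ i ∈ Icc 1 n, c i * ∑ j ∈ Icc 1 (i - 1), p j (i - j) * a j (i - j) * w j * w (i - j)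
      = ∑ x ∈ pairsSumLe n, a x.1 x.2 * w x.1 * w x.2 * (p x.1 x.2 * c (x.1 + x.2)) := by
    simp only [mul_sum]
    refine (sum_Icc_sum_Icc_pred_eq_sum_pairsSumLe n _).trans (sum_congr rfl fun x _ => ?_)
    simp only [Nat.add_sub_cancel_left]
    ring
  have loss : ∑ i ∈ Icc 1 n, c i * ∑ j ∈ Icc 1 (n - i), a i j * w i * w j
      = (1 / 2) * ∑ x ∈ pairsSumLe n, a x.1 x.2 * w x.1 * w x.2 * (c x.1 + c x.2) := by
    simp only [mul_sum]
    rw [sum_Icc_sum_Icc_tsub_eq_sum_pairsSumLe n fun i j => c i * (a i j * w i * w j)]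
    have swap := sum_pairsSumLe_swap n fun i j => c i * (a i j * w i * w j)
    calc _ = (1 / 2) * (∑ x ∈ pairsSumLe n, c x.1 * (a x.1 x.2 * w x.1 * w x.2)
          + ∑ x ∈ pairsSumLe n, c x.2 * (a x.2 x.1 * w x.2 * w x.1)) := by
          rw [← swap]; ring
      _ = _ := by
          rw [← sum_add_distrib, mul_sum]
          refine sum_congr rfl fun x _ => ?_
          rw [ha_symm x.2]
          ring
  have breakage : ∑ i ∈ Icc 1 n, c i * ∑ j ∈ Icc (i + 1) n, ∑ k ∈ Icc 1 (j - 1),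
        N (j - k) k i * (1 - p (j - k) k) * a (j - k) k * w (j - k) * w k
      = ∑ x ∈ pairsSumLe n, a x.1 x.2 * w x.1 * w x.2 *
          ((1 - p x.1 x.2) * ∑ s ∈ Icc 1 (x.1 + x.2 - 1), c s * N x.1 x.2 s) := by
    simp only [mul_sum]
    rw [sum_Icc_sum_Icc_succ_sum_Icc_pred_eq_sum_pairsSumLe n fun i j k =>
      c i * (N (j - k) k i * (1 - p (j - k) k) * a (j - k) k * w (j - k) * w k)]
    simp only [Nat.add_sub_cancel_left]
    have swap := sum_pairsSumLe_swap n fun u v => ∑ s ∈ Icc 1 (v + u - 1),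
      c s * (N u v s * (1 - p u v) * a u v * w u * w v)
    rw [← swap]
    refine sum_congr rfl fun x _ => ?_
    rw [add_comm x.2]
    exact sum_congr rfl fun s _ => by ring
  conv_lhs => simp only [truncRHS, mul_add (c _), mul_sub (c _), sum_add_distrib, sum_sub_distrib,
    mul_left_comm (c _) (1 / 2 : ℝ), ← mul_sum]
  rw [gain, loss, breakage, ← mul_sub, ← mul_add, ← sum_sub_distrib, ← sum_add_distrib]
  exact congrArg _ (sum_congr rfl fun x _ => by ring)

theorem sum_mul_truncRHS_eq_zero (ha_symm : ∀ i j, a i j = a j i)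
    (hN_mass : ∀ i j, 1 ≤ i → 1 ≤ j →
      ∑ s ∈ Icc 1 (i + j - 1), (Nat.cast s : ℝ) * N i j s = (i : ℝ) + (j : ℝ))
    (n : ℕ) (w : ℕ → ℝ) :
    ∑ i ∈ Icc 1 n, (i : ℝ) * truncRHS a p N n i w = 0 := by
  rw [sum_mul_truncRHS ha_symm, sum_eq_zero fun x hx => ?_, mul_zero]
  rw [mem_pairsSumLe] at hx
  rw [hN_mass x.1 x.2 hx.1 hx.2.1]
  push_cast
  ring

variable {q A jq : ℝ}

theorem sum_rpow_mul_truncRHS_le (hq : 1 ≤ q) (hA : 0 ≤ A) (hjq : 0 ≤ jq)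
    (ha_nonneg : ∀ i j, 0 ≤ a i j) (ha_symm : ∀ i j, a i j = a j i)
    (ha_bound : ∀ i j, 1 ≤ i → 1 ≤ j → a i j ≤ A * ((i : ℝ) + (j : ℝ)))
    (hp_le : ∀ i j, p i j ≤ 1) (hN_nonneg : ∀ i j s, 0 ≤ N i j s)
    (hN_mass : ∀ i j, 1 ≤ i → 1 ≤ j →
      ∑ s ∈ Icc 1 (i + j - 1), (Nat.cast s : ℝ) * N i j s = (i : ℝ) + (j : ℝ))
    (hjq_ineq : ∀ i j : ℕ, 1 ≤ i → 1 ≤ j →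
      ((i : ℝ) + (j : ℝ)) * (((i : ℝ) + (j : ℝ)) ^ q - (i : ℝ) ^ q - (j : ℝ) ^ q)
        ≤ jq * ((i : ℝ) * (j : ℝ) ^ q + (i : ℝ) ^ q * (j : ℝ)))
    (n : ℕ) (w : ℕ → ℝ) (hw : ∀ i ∈ Icc 1 n, 0 ≤ w i) :
    ∑ i ∈ Icc 1 n, (i : ℝ) ^ q * truncRHS a p N n i w
      ≤ A * jq * (∑ i ∈ Icc 1 n, (i : ℝ) * w i) * ∑ i ∈ Icc 1 n, (i : ℝ) ^ q * w i := by
  set bound : ℕ × ℕ → ℝ := fun x =>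
    w x.1 * w x.2 * (A * jq * ((x.1 : ℝ) * (x.2 : ℝ) ^ q + (x.1 : ℝ) ^ q * (x.2 : ℝ)))
  have pair_le : ∀ x ∈ pairsSumLe n, a x.1 x.2 * w x.1 * w x.2 *
      (p x.1 x.2 * ((x.1 + x.2 : ℕ) : ℝ) ^ q - (x.1 : ℝ) ^ q - (x.2 : ℝ) ^ q
        + (1 - p x.1 x.2) * ∑ s ∈ Icc 1 (x.1 + x.2 - 1), (s : ℝ) ^ q * N x.1 x.2 s) ≤ bound x := by
    rintro ⟨u, v⟩ huv
    rw [mem_pairsSumLe] at huv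
    obtain ⟨hu, hv, huvn⟩ := huv
    have fragment_moment_le := sum_rpow_mul_le_rpow (Icc 1 (u + v - 1)) hq (x := fun s => (s : ℝ))
      (fun s hs => ⟨s.cast_nonneg, by rw [mem_Icc] at hs; exact_mod_cast (by omega : s ≤ u + v)⟩)
      (fun s _ => hN_nonneg u v s) (hN_mass u v hu hv)
    have := mul_le_mul_of_nonneg_right
      (collision_moment_change_le u.cast_nonneg v.cast_nonneg hq hA (ha_nonneg u v)
        (ha_bound u v hu hv) (hp_le u v) fragment_moment_le (hjq_ineq u v hu hv))
      (mul_nonneg (hw u (mem_Icc.2 ⟨hu, by omega⟩)) (hw v (mem_Icc.2 ⟨hv, by omega⟩)))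
    push_cast
    linarith
  have square_eq : ∑ x ∈ Icc 1 n ×ˢ Icc 1 n, bound x
      = 2 * (A * jq * (∑ i ∈ Icc 1 n, (i : ℝ) * w i) * ∑ i ∈ Icc 1 n, (i : ℝ) ^ q * w i) := by
    calc ∑ x ∈ Icc 1 n ×ˢ Icc 1 n, bound x
        = A * jq * (∑ x ∈ Icc 1 n ×ˢ Icc 1 n, ((x.1 : ℝ) * w x.1) * ((x.2 : ℝ) ^ q * w x.2)
          + ∑ x ∈ Icc 1 n ×ˢ Icc 1 n, ((x.1 : ℝ) ^ q * w x.1) * ((x.2 : ℝ) * w x.2)) := by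
          rw [← sum_add_distrib, mul_sum]
          exact sum_congr rfl fun _ _ => by ring
      _ = A * jq * ((∑ i ∈ Icc 1 n, (i : ℝ) * w i) * ∑ i ∈ Icc 1 n, (i : ℝ) ^ q * w i
          + (∑ i ∈ Icc 1 n, (i : ℝ) ^ q * w i) * ∑ i ∈ Icc 1 n, (i : ℝ) * w i) := by
          rw [sum_mul_sum, sum_mul_sum, sum_product, sum_product]
      _ = _ := by ring
  rw [sum_mul_truncRHS ha_symm]
  calc _ ≤ 1 / 2 * ∑ x ∈ Icc 1 n ×ˢ Icc 1 n, bound x := by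
        refine mul_le_mul_of_nonneg_left ((sum_le_sum pair_le).trans
          (sum_le_sum_of_subset_of_nonneg (filter_subset _ _) fun x hx _ => ?_)) (by norm_num)
        rw [mem_product] at hx
        exact mul_nonneg (mul_nonneg (hw _ hx.1) (hw _ hx.2)) (by positivity)
    _ = _ := by rw [square_eq]; ring

theorem sum_rpow_mul_le_exp_mul_of_truncated (hq : 1 ≤ q) (hA : 0 ≤ A) (hjq : 0 ≤ jq)
    (ha_nonneg : ∀ i j, 0 ≤ a i j) (ha_symm : ∀ i j, a i j = a j i)
    (ha_bound : ∀ i j, 1 ≤ i → 1 ≤ j → a i j ≤ A * ((i : ℝ) + (j : ℝ)))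
    (hp_le : ∀ i j, p i j ≤ 1) (hN_nonneg : ∀ i j s, 0 ≤ N i j s)
    (hN_mass : ∀ i j, 1 ≤ i → 1 ≤ j →
      ∑ s ∈ Icc 1 (i + j - 1), (Nat.cast s : ℝ) * N i j s = (i : ℝ) + (j : ℝ))
    (hjq_ineq : ∀ i j : ℕ, 1 ≤ i → 1 ≤ j →
      ((i : ℝ) + (j : ℝ)) * (((i : ℝ) + (j : ℝ)) ^ q - (i : ℝ) ^ q - (j : ℝ) ^ q)
        ≤ jq * ((i : ℝ) * (j : ℝ) ^ q + (i : ℝ) ^ q * (j : ℝ)))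
    {n : ℕ} {T L : ℝ} {v : ℕ → ℝ → ℝ}
    (hv_nonneg : ∀ i ∈ Icc 1 n, ∀ t ∈ Set.Icc 0 T, 0 ≤ v i t)
    (hv : ∀ i ∈ Icc 1 n, ∀ t ∈ Set.Icc 0 T,
      HasDerivWithinAt (v i) (truncRHS a p N n i fun j => v j t) (Set.Icc 0 T) t)
    (hL : ∑ i ∈ Icc 1 n, (i : ℝ) * v i 0 ≤ L) :
    ∀ t ∈ Set.Icc 0 T, ∑ i ∈ Icc 1 n, (i : ℝ) ^ q * v i t
      ≤ Real.exp (A * jq * L * t) * ∑ i ∈ Icc 1 n, (i : ℝ) ^ q * v i 0 := by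
  have moment_deriv : ∀ c : ℕ → ℝ, ∀ t ∈ Set.Icc 0 T,
      HasDerivWithinAt (fun s => ∑ i ∈ Icc 1 n, c i * v i s)
        (∑ i ∈ Icc 1 n, c i * truncRHS a p N n i fun j => v j t) (Set.Icc 0 T) t :=
    fun c t ht => HasDerivWithinAt.fun_sum fun i hi => (hv i hi t ht).const_mul _
  have mass_le : ∀ t ∈ Set.Icc 0 T, ∑ i ∈ Icc 1 n, (i : ℝ) * v i t ≤ L := fun t ht => by
    have := le_mul_exp_of_hasDerivWithinAt_le_mul (K := 0) (moment_deriv _) (fun x _ => by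
      rw [sum_mul_truncRHS_eq_zero ha_symm hN_mass, zero_mul]) t ht
    rw [zero_mul, Real.exp_zero, mul_one] at this
    exact this.trans hL
  have moment_deriv_le : ∀ x ∈ Set.Icc 0 T,
      ∑ i ∈ Icc 1 n, (i : ℝ) ^ q * truncRHS a p N n i (fun j => v j x)
        ≤ A * jq * L * ∑ i ∈ Icc 1 n, (i : ℝ) ^ q * v i x := fun x hx => calc
    _ ≤ A * jq * (∑ i ∈ Icc 1 n, (i : ℝ) * v i x) * ∑ i ∈ Icc 1 n, (i : ℝ) ^ q * v i x :=
        sum_rpow_mul_truncRHS_le hq hA hjq ha_nonneg ha_symm ha_bound hp_le hN_nonneg hN_mass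
          hjq_ineq n _ fun i hi => hv_nonneg i hi x hx
    _ ≤ A * jq * L * ∑ i ∈ Icc 1 n, (i : ℝ) ^ q * v i x := by
        gcongr
        · exact sum_nonneg fun i hi => mul_nonneg (by positivity) (hv_nonneg i hi x hx)
        · exact mass_le x hx
  intro t ht
  exact (le_mul_exp_of_hasDerivWithinAt_le_mul (moment_deriv _) moment_deriv_le t ht).trans_eq
    (by rw [sub_zero, mul_comm])

end TruncatedSystem

theorem propagation_of_moments_general
    (T : ℝ) (β q : ℝ) (hβ1 : 1 < β) (hq : 1 < q)
    (A : ℝ) (hA : 0 < A)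
    (a p : ℕ → ℕ → ℝ) (N : ℕ → ℕ → ℕ → ℝ)
    (ha_nonneg : ∀ i j, 0 ≤ a i j) (ha_symm : ∀ i j, a i j = a j i)
    (ha_bound : ∀ i j, 1 ≤ i → 1 ≤ j → a i j ≤ A * ((i : ℝ) + (j : ℝ)))
    (hp_le : ∀ i j, p i j ≤ 1)
    (hN_nonneg : ∀ i j s, 0 ≤ N i j s)
    (hN_mass : ∀ i j, 1 ≤ i → 1 ≤ j →
      ∑ s ∈ Finset.Icc 1 (i+j-1), (Nat.cast s : ℝ) * N i j s = (i : ℝ) + (j : ℝ))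
    (w0 : ℕ → ℝ) (hw0_nonneg : ∀ i, 1 ≤ i → 0 ≤ w0 i)
    (hw0_momβ : Summable (fun i : ℕ => (Nat.cast i : ℝ) ^ β * w0 i))
    (hw0_momq : Summable (fun i : ℕ => (Nat.cast i : ℝ) ^ q * w0 i))
    (norm0 : ℝ) (hnorm0 : norm0 = ∑' i : ℕ, (Nat.cast i : ℝ) ^ β * w0 i)
    (wtr : ℕ → ℕ → ℝ → ℝ)
    (hwtr_nonneg : ∀ n, 2 ≤ n → ∀ i ∈ Finset.Icc 1 n, ∀ t ∈ Set.Icc (0:ℝ) T,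
      0 ≤ wtr n i t)
    (hwtr_init : ∀ n, 2 ≤ n → ∀ i ∈ Finset.Icc 1 n, wtr n i 0 = w0 i)
    (hwtr_ode : ∀ n, 2 ≤ n → ∀ i ∈ Finset.Icc 1 n, ∀ t ∈ Set.Icc (0:ℝ) T,
      HasDerivWithinAt (wtr n i) (truncRHS a p N n i (fun j => wtr n j t))
        (Set.Icc 0 T) t)
    (w : ℕ → ℝ → ℝ)
    (hw_lim : ∀ i, 1 ≤ i → ∀ t ∈ Set.Icc (0:ℝ) T,
      Filter.Tendsto (fun n => wtr n i t) Filter.atTop (nhds (w i t)))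
    (jq : ℝ) (hjq : 0 < jq)
    (hjq_ineq : ∀ i j : ℕ, 1 ≤ i → 1 ≤ j →
      ((i : ℝ) + (j : ℝ)) * (((i : ℝ) + (j : ℝ)) ^ q - (i : ℝ) ^ q - (j : ℝ) ^ q)
        ≤ jq * ((i : ℝ) * (j : ℝ) ^ q + (i : ℝ) ^ q * (j : ℝ))) :
    ∀ t ∈ Set.Icc (0:ℝ) T,
      Summable (fun i : ℕ => (Nat.cast i : ℝ) ^ q * w i t) ∧
      ∑' i : ℕ, (Nat.cast i : ℝ) ^ q * w i t
        ≤ Real.exp (A * jq * norm0 * t) * ∑' i : ℕ, (Nat.cast i : ℝ) ^ q * w0 i := by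
  have hq0 : q ≠ 0 := by linarith
  have initial_mass_le : ∀ n : ℕ, 2 ≤ n → ∑ i ∈ Icc 1 n, (i : ℝ) * wtr n i 0 ≤ norm0 := fun n hn =>
    calc _ = ∑ i ∈ Icc 1 n, (i : ℝ) * w0 i := sum_congr rfl fun i hi => by rw [hwtr_init n hn i hi]
      _ ≤ ∑ i ∈ Icc 1 n, (i : ℝ) ^ β * w0 i := sum_le_sum fun i hi =>
          mul_le_mul_of_nonneg_right (Real.self_le_rpow_of_one_le
            (by exact_mod_cast (mem_Icc.1 hi).1) hβ1.le) (hw0_nonneg i (mem_Icc.1 hi).1)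
      _ ≤ norm0 := hnorm0 ▸ sum_Icc_rpow_mul_le_tsum (by linarith) hw0_nonneg hw0_momβ n
  intro t ht
  refine summable_and_tsum_le_of_tendsto (F := fun n i => (i : ℝ) ^ q * wtr n i t)
    (fun i => ?_) ?_ ?_
  · rcases Nat.eq_zero_or_pos i with rfl | hi
    · simp [Real.zero_rpow hq0]
    · exact (hw_lim i hi t ht).const_mul _
  · filter_upwards [eventually_ge_atTop 2] with n hn i hin
    rcases Nat.eq_zero_or_pos i with rfl | hi
    · simp [Real.zero_rpow hq0]
    · exact mul_nonneg (by positivity) (hwtr_nonneg n hn i (mem_Icc.2 ⟨hi, hin⟩) t ht)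
  · filter_upwards [eventually_ge_atTop 2] with n hn
    rw [sum_range_succ_rpow_mul_eq_sum_Icc hq0]
    refine (sum_rpow_mul_le_exp_mul_of_truncated hq.le hA.le hjq.le ha_nonneg ha_symm ha_bound
      hp_le hN_nonneg hN_mass hjq_ineq (hwtr_nonneg n hn) (hwtr_ode n hn)
      (initial_mass_le n hn) t ht).trans (mul_le_mul_of_nonneg_left ?_ (Real.exp_pos _).le)
    rw [sum_congr rfl fun i hi => by rw [hwtr_init n hn i hi]]
    exact sum_Icc_rpow_mul_le_tsum hq0 hw0_nonneg hw0_momq n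

/-- Propagation of moments: if the initial data additionally has finite `q`-th
moment for some `q > 1`, then the classical solution constructed as the limit of
the truncated solutions satisfies
`∑_{i≥1} i^q wᵢ(t) ≤ exp(A ȷ_q ‖w⁰‖ t) ∑_{i≥1} i^q wᵢ⁰` on `[0, T]`;
in particular its `q`-th moment stays finite on `[0, T]`. -/
theorem propagation_of_moments
    (T : ℝ) (hT : 0 < T) (β q : ℝ) (hβ1 : 1 < β) (hβ2 : β ≤ 2) (hq : 1 < q)
    (A α₀ : ℝ) (hA : 0 < A) (hα₀ : 0 < α₀)
    (a p : ℕ → ℕ → ℝ) (N : ℕ → ℕ → ℕ → ℝ)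
    (ha_nonneg : ∀ i j, 0 ≤ a i j) (ha_symm : ∀ i j, a i j = a j i)
    (ha_bound : ∀ i j, 1 ≤ i → 1 ≤ j → a i j ≤ A * ((i : ℝ) + (j : ℝ)))
    (hp_nonneg : ∀ i j, 0 ≤ p i j) (hp_symm : ∀ i j, p i j = p j i)
    (hp_le : ∀ i j, p i j ≤ 1)
    (hN_nonneg : ∀ i j s, 0 ≤ N i j s) (hN_symm : ∀ i j s, N i j s = N j i s)
    (hN_bound : ∀ i j s, 1 ≤ i → 1 ≤ j → s ∈ Finset.Icc 1 (i+j-1) → N i j s ≤ α₀)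
    (hN_mass : ∀ i j, 1 ≤ i → 1 ≤ j →
      ∑ s ∈ Finset.Icc 1 (i+j-1), (Nat.cast s : ℝ) * N i j s = (i : ℝ) + (j : ℝ))
    (w0 : ℕ → ℝ) (hw0_nonneg : ∀ i, 1 ≤ i → 0 ≤ w0 i)
    (hw0_momβ : Summable (fun i : ℕ => (Nat.cast i : ℝ) ^ β * w0 i))
    (hw0_momq : Summable (fun i : ℕ => (Nat.cast i : ℝ) ^ q * w0 i))
    (norm0 : ℝ) (hnorm0 : norm0 = ∑' i : ℕ, (Nat.cast i : ℝ) ^ β * w0 i)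
    (wtr : ℕ → ℕ → ℝ → ℝ)
    (hwtr_nonneg : ∀ n, 2 ≤ n → ∀ i ∈ Finset.Icc 1 n, ∀ t ∈ Set.Icc (0:ℝ) T,
      0 ≤ wtr n i t)
    (hwtr_init : ∀ n, 2 ≤ n → ∀ i ∈ Finset.Icc 1 n, wtr n i 0 = w0 i)
    (hwtr_ode : ∀ n, 2 ≤ n → ∀ i ∈ Finset.Icc 1 n, ∀ t ∈ Set.Icc (0:ℝ) T,
      HasDerivWithinAt (wtr n i) (truncRHS a p N n i (fun j => wtr n j t))
        (Set.Icc 0 T) t)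
    (hwtr_ext : ∀ n, 2 ≤ n → ∀ i, n < i → ∀ t : ℝ, wtr n i t = 0)
    (w : ℕ → ℝ → ℝ)
    (hw : IsCoagBreakSol a p N T w)
    (hw_init : ∀ i, 1 ≤ i → w i 0 = w0 i)
    (hw_lim : ∀ i, 1 ≤ i → ∀ t ∈ Set.Icc (0:ℝ) T,
      Filter.Tendsto (fun n => wtr n i t) Filter.atTop (nhds (w i t)))
    (jq : ℝ) (hjq : 0 < jq)
    (hjq_ineq : ∀ i j : ℕ, 1 ≤ i → 1 ≤ j →
      ((i : ℝ) + (j : ℝ)) * (((i : ℝ) + (j : ℝ)) ^ q - (i : ℝ) ^ q - (j : ℝ) ^ q)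
        ≤ jq * ((i : ℝ) * (j : ℝ) ^ q + (i : ℝ) ^ q * (j : ℝ))) :
    ∀ t ∈ Set.Icc (0:ℝ) T,
      Summable (fun i : ℕ => (Nat.cast i : ℝ) ^ q * w i t) ∧
      ∑' i : ℕ, (Nat.cast i : ℝ) ^ q * w i t
        ≤ Real.exp (A * jq * norm0 * t) * ∑' i : ℕ, (Nat.cast i : ℝ) ^ q * w0 i :=
  propagation_of_moments_general T β q hβ1 hq A hA a p N ha_nonneg ha_symm ha_bound hp_le hN_nonneg
    hN_mass w0 hw0_nonneg hw0_momβ hw0_momq norm0 hnorm0 wtr hwtr_nonneg hwtr_init hwtr_ode w hw_lim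
    jq hjq hjq_ineq
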